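/- Let W be a real random variable whose distribution is symmetric about zero with E W² = 1, let W^(2) have the 2-power bias distribution of W, and let V be uniform on (−1,1) and independent of W^(2). Then V·W^(2) has the zero-bias distribution of W; that is, for all absolutely continuous f with E|W f(W)| < ∞ and bounded derivative, E f′(V·W^(2)) = E[W f(W)]. -/

import Mathlib

/-!
Condition on `W⁽²⁾ = w`. Since `V` is uniform on `(-1, 1)`, the fundamental theorem of calculus
gives `E f'(V w) = (f w - f (-w)) / (2 w)`, and `W⁽²⁾` has no atom at `0`. Integrating against
the law of `W⁽²⁾`, whose density with respect to the law `μ` of `W` is `x²`, yields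
`∫ (x f x - x f (-x)) / 2 dμ`, which equals `∫ x f x dμ` because `μ` is symmetric.
-/

open MeasureTheory ProbabilityTheory

/-- The `α`-power bias distribution of a distribution `μ` on `ℝ`. -/
noncomputable def powerBias (α : ℝ) (μ : Measure ℝ) : Measure ℝ :=
  (ENNReal.ofReal (∫ x, |x| ^ α ∂μ))⁻¹ •
    μ.withDensity (fun x => ENNReal.ofReal (|x| ^ α))

/-- The uniform probability measure on the open interval `(a, b)`. -/
noncomputable def uniformIoo (a b : ℝ) : Measure ℝ :=
  (ENNReal.ofReal (b - a))⁻¹ • volume.restrict (Set.Ioo a b)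

/-- `f` is absolutely continuous with (a.e.) derivative `f'`, and `f'` is bounded. -/
def IsAbsContWithBddDeriv (f f' : ℝ → ℝ) : Prop :=
  Measurable f' ∧ (∃ C, ∀ x, |f' x| ≤ C) ∧ ∀ x, f x = f 0 + ∫ t in (0:ℝ)..x, f' t

theorem ProbabilityTheory.IndepFun.integral_comp_eq_integral_integral
    {Ω α β E : Type*} [MeasurableSpace Ω] [MeasurableSpace α] [MeasurableSpace β]
    [NormedAddCommGroup E] [NormedSpace ℝ E]
    {μ : Measure Ω} [IsFiniteMeasure μ] {X : Ω → α} {Y : Ω → β} (hXY : IndepFun X Y μ)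
    (hX : AEMeasurable X μ) (hY : AEMeasurable Y μ) {F : α → β → E}
    (hF : Integrable (Function.uncurry F) ((μ.map X).prod (μ.map Y))) :
    ∫ ω, F (X ω) (Y ω) ∂μ = ∫ y, ∫ x, F x y ∂μ.map X ∂μ.map Y := by
  have hmap : μ.map (fun ω => (X ω, Y ω)) = (μ.map X).prod (μ.map Y) :=
    (indepFun_iff_map_prod_eq_prod_map_map hX hY).mp hXY
  rw [← integral_integral_swap hF, integral_integral hF, ← hmap,
    integral_map (hX.prodMk hY) (hmap ▸ hF.aestronglyMeasurable)]

theorem integral_uniformIoo {E : Type*} [NormedAddCommGroup E] [NormedSpace ℝ E] {a b : ℝ}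
    (hab : a ≤ b) (g : ℝ → E) :
    ∫ x, g x ∂uniformIoo a b = (b - a)⁻¹ • ∫ x in a..b, g x := by
  rw [uniformIoo, integral_smul_measure, ENNReal.toReal_inv,
    ENNReal.toReal_ofReal (sub_nonneg.mpr hab), intervalIntegral.integral_of_le hab,
    integral_Ioc_eq_integral_Ioo]

theorem integral_powerBias (α : ℝ) (μ : Measure ℝ) (g : ℝ → ℝ) :
    ∫ x, g x ∂powerBias α μ = (∫ x, |x| ^ α ∂μ)⁻¹ * ∫ x, |x| ^ α * g x ∂μ := by
  have hdens : Measurable fun x : ℝ => ENNReal.ofReal (|x| ^ α) :=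
    (measurable_abs.pow_const α).ennreal_ofReal
  rw [powerBias, integral_smul_measure, ENNReal.toReal_inv,
    ENNReal.toReal_ofReal (integral_nonneg fun x => by positivity), smul_eq_mul,
    integral_withDensity_eq_integral_toReal_smul hdens
      (ae_of_all _ fun _ => ENNReal.ofReal_lt_top)]
  simp_rw [ENNReal.toReal_ofReal (Real.rpow_nonneg (abs_nonneg _) α), smul_eq_mul]

theorem powerBias_singleton_zero {α : ℝ} (hα : α ≠ 0) (μ : Measure ℝ) :
    powerBias α μ {0} = 0 := by
  simp [powerBias, Real.zero_rpow hα]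

theorem ae_ne_zero_powerBias {α : ℝ} (hα : α ≠ 0) (μ : Measure ℝ) :
    ∀ᵐ x ∂powerBias α μ, x ≠ 0 :=
  measure_eq_zero_iff_ae_notMem.mp (powerBias_singleton_zero hα μ)

theorem integral_powerBias_two_symm_div (μ : Measure ℝ) [μ.IsNegInvariant]
    (hμ : ∫ x, x ^ 2 ∂μ = 1) {g : ℝ → ℝ} (hg : Integrable (fun x => x * g x) μ) :
    ∫ w, (g w - g (-w)) / (2 * w) ∂powerBias 2 μ = ∫ x, x * g x ∂μ := by
  have hmoment : ∫ x, |x| ^ (2 : ℝ) ∂μ = 1 := by simpa only [Real.rpow_two, sq_abs] using hμ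
  have hpoint : ∀ x : ℝ, |x| ^ (2 : ℝ) * ((g x - g (-x)) / (2 * x))
      = (x * g x + (-x) * g (-x)) / 2 := by
    intro x
    rw [Real.rpow_two, sq_abs]
    rcases eq_or_ne x 0 with rfl | hx
    · simp
    · field_simp
      ring
  calc ∫ w, (g w - g (-w)) / (2 * w) ∂powerBias 2 μ
      = ∫ x, (x * g x + (-x) * g (-x)) / 2 ∂μ := by
        simp_rw [integral_powerBias, hmoment, inv_one, one_mul, hpoint]
    _ = ((∫ x, x * g x ∂μ) + ∫ x, (-x) * g (-x) ∂μ) / 2 := by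
        rw [integral_div, integral_add hg hg.comp_neg]
    _ = ∫ x, x * g x ∂μ := by
        rw [integral_neg_eq_self (fun x => x * g x) μ]
        ring

namespace IsAbsContWithBddDeriv

variable {f f' : ℝ → ℝ}

theorem intervalIntegrable (hf : IsAbsContWithBddDeriv f f') (a b : ℝ) :
    IntervalIntegrable f' volume a b := by
  obtain ⟨hmeas, ⟨C, hC⟩, -⟩ := hf
  rw [intervalIntegrable_iff]
  exact IntegrableOn.of_bound measure_Ioc_lt_top hmeas.aestronglyMeasurable C
    (ae_of_all _ fun x => hC x)

theorem continuous (hf : IsAbsContWithBddDeriv f f') : Continuous f := by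
  rw [funext hf.2.2]
  exact continuous_const.add (intervalIntegral.continuous_primitive hf.intervalIntegrable 0)

theorem integral_eq_sub (hf : IsAbsContWithBddDeriv f f') (a b : ℝ) :
    ∫ t in a..b, f' t = f b - f a := by
  rw [← intervalIntegral.integral_interval_sub_left (hf.intervalIntegrable 0 b)
    (hf.intervalIntegrable 0 a), hf.2.2 a, hf.2.2 b]
  ring

theorem integral_uniformIoo_comp_mul (hf : IsAbsContWithBddDeriv f f') {w : ℝ} (hw : w ≠ 0) :
    ∫ v, f' (v * w) ∂uniformIoo (-1) 1 = (f w - f (-w)) / (2 * w) := by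
  rw [integral_uniformIoo (by norm_num), intervalIntegral.integral_comp_mul_right f' hw,
    hf.integral_eq_sub, neg_one_mul, one_mul, smul_eq_mul, smul_eq_mul]
  field_simp
  ring

theorem integrable_comp_mul (hf : IsAbsContWithBddDeriv f f') (μ ν : Measure ℝ)
    [IsFiniteMeasure μ] [IsFiniteMeasure ν] :
    Integrable (Function.uncurry fun v w => f' (v * w)) (μ.prod ν) := by
  obtain ⟨hmeas, ⟨C, hC⟩, -⟩ := hf
  exact .of_bound (hmeas.comp (measurable_fst.mul measurable_snd)).aestronglyMeasurable C
    (ae_of_all _ fun p => hC _)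

end IsAbsContWithBddDeriv

theorem zero_bias_representation_general
    {Ω Ω' : Type*} [MeasureSpace Ω] [IsProbabilityMeasure (ℙ : Measure Ω)]
    [MeasureSpace Ω'] [IsProbabilityMeasure (ℙ : Measure Ω')]
    (W : Ω → ℝ) (V W2 : Ω' → ℝ)
    (hW : Measurable W) (hV : Measurable V) (hW2 : Measurable W2)
    (hsymm : Measure.map W ℙ = Measure.map (fun ω => -W ω) ℙ)
    (hvar : (∫ ω, W ω ^ 2 ∂ℙ) = 1)
    (hbias : Measure.map W2 ℙ = powerBias 2 (Measure.map W ℙ))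
    (hVlaw : Measure.map V ℙ = uniformIoo (-1) 1)
    (hindep : IndepFun V W2 ℙ)
    (f f' : ℝ → ℝ) (hf : IsAbsContWithBddDeriv f f')
    (hWf : Integrable (fun ω => W ω * f (W ω)) ℙ) :
    ∫ ω, f' (V ω * W2 ω) ∂ℙ = ∫ ω, W ω * f (W ω) ∂ℙ := by
  have : (Measure.map W ℙ).IsNegInvariant :=
    ⟨by rw [Measure.neg_def, Measure.map_map measurable_neg hW, hsymm]; rfl⟩
  have hxf : Continuous fun x => x * f x := continuous_id.mul hf.continuous
  calc ∫ ω, f' (V ω * W2 ω) ∂ℙ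
      = ∫ w, ∫ v, f' (v * w) ∂uniformIoo (-1) 1 ∂powerBias 2 (Measure.map W ℙ) := by
        rw [hindep.integral_comp_eq_integral_integral hV.aemeasurable hW2.aemeasurable
          (hf.integrable_comp_mul _ _), hVlaw, hbias]
    _ = ∫ w, (f w - f (-w)) / (2 * w) ∂powerBias 2 (Measure.map W ℙ) :=
        integral_congr_ae ((ae_ne_zero_powerBias two_ne_zero _).mono
          fun w hw => hf.integral_uniformIoo_comp_mul hw)
    _ = ∫ x, x * f x ∂Measure.map W ℙ :=
        integral_powerBias_two_symm_div _
          (by rwa [integral_map hW.aemeasurable (by fun_prop)])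
          ((integrable_map_measure hxf.aestronglyMeasurable hW.aemeasurable).mpr hWf)
    _ = ∫ ω, W ω * f (W ω) ∂ℙ := integral_map hW.aemeasurable hxf.aestronglyMeasurable

/-- If `W` is symmetric about zero with `E W² = 1`, `W⁽²⁾` has the 2-power bias
distribution of `W`, and `V` is uniform on `(-1,1)` independent of `W⁽²⁾`, then `V·W⁽²⁾`
has the zero-bias distribution of `W`: for every absolutely continuous `f` with
`E|W f(W)| < ∞` and bounded derivative, `E f'(V·W⁽²⁾) = E[W f(W)]`. -/
theorem zero_bias_representation
    {Ω Ω' : Type*} [MeasureSpace Ω] [IsProbabilityMeasure (ℙ : Measure Ω)]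
    [MeasureSpace Ω'] [IsProbabilityMeasure (ℙ : Measure Ω')]
    (W : Ω → ℝ) (V W2 : Ω' → ℝ)
    (hW : Measurable W) (hV : Measurable V) (hW2 : Measurable W2)
    (hsymm : Measure.map W ℙ = Measure.map (fun ω => -W ω) ℙ)
    (hint : Integrable (fun ω => W ω ^ 2) ℙ) (hvar : (∫ ω, W ω ^ 2 ∂ℙ) = 1)
    (hbias : Measure.map W2 ℙ = powerBias 2 (Measure.map W ℙ))
    (hVlaw : Measure.map V ℙ = uniformIoo (-1) 1)
    (hindep : IndepFun V W2 ℙ)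
    (f f' : ℝ → ℝ) (hf : IsAbsContWithBddDeriv f f')
    (hWf : Integrable (fun ω => W ω * f (W ω)) ℙ) :
    ∫ ω, f' (V ω * W2 ω) ∂ℙ = ∫ ω, W ω * f (W ω) ∂ℙ :=
  zero_bias_representation_general W V W2 hW hV hW2 hsymm hvar hbias hVlaw hindep f f' hf hWf
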